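/- arXiv:2408.03853 — 2 statements merged into one kernel-verified Lean document; each statement's English description precedes it below -/
import Mathlib

section
/- Let (Y_i)_{i≥1} be a sequence of non-negative random variables and τ an N-valued random variable on a probability space. Then for any α > 0 and β > (1+α)/α, there exists a constant C = C(α,β) (one can take C = (Σ_{i≥1} i^{-α(β-1)})^{1/β}) such that E[max_{1≤i≤τ} Y_i] ≤ C · E[τ^α]^{(β-1)/β} · sup_{i≥1} E[Y_i^β]^{1/β}. -/
open MeasureTheory Filter
open scoped ENNReal ProbabilityTheory

/-- Maximal lemma: for non-negative random variables `(Y_i)` and an `ℕ`-valued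
random time `τ ≥ 1`, for `α > 0` and `β > (1+α)/α` there is a constant `C = C(α,β)` with
`E[max_{1≤i≤τ} Y_i] ≤ C · E[τ^α]^{(β-1)/β} · sup_{i≥1} E[Y_i^β]^{1/β}`. -/
theorem stmt0 {Ω : Type*} [MeasureSpace Ω] [IsProbabilityMeasure (ℙ : Measure Ω)]
    (Y : ℕ → Ω → ℝ) (hYmeas : ∀ i, Measurable (Y i)) (hYpos : ∀ i ω, 0 ≤ Y i ω)
    (τ : Ω → ℕ) (hτmeas : Measurable τ) (hτ : ∀ ω, 1 ≤ τ ω)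
    (α β : ℝ) (hα : 0 < α) (hβ : (1 + α) / α < β) :
    ∃ C : ℝ≥0∞, C ≠ ⊤ ∧
      ∫⁻ ω, ⨆ i ∈ Finset.Icc 1 (τ ω), ENNReal.ofReal (Y i ω) ∂ℙ ≤
        C * (∫⁻ ω, ENNReal.ofReal ((τ ω : ℝ) ^ α) ∂ℙ) ^ ((β - 1) / β) *
          ⨆ i : ℕ, ⨆ _ : 1 ≤ i, (∫⁻ ω, ENNReal.ofReal (Y i ω ^ β) ∂ℙ) ^ (1 / β) := by
  have hβ1 : 1 < β := by
    have h1 : 1 < (1 + α) / α := by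
      rw [lt_div_iff₀ hα]; linarith
    linarith
  have hβ0 : 0 < β := by linarith
  set γ : ℝ := α * (β - 1) with hγdef
  have hγ : 1 < γ := by
    have h2 : 1 + α < β * α := (div_lt_iff₀ hα).mp hβ
    nlinarith
  have hγ0 : 0 < γ := by linarith
  -- weights
  set w : ℕ → ℝ≥0∞ := fun j => if 1 ≤ j then ((j : ℝ≥0∞)) ^ (-γ) else 0 with hw
  have hwval : ∀ j : ℕ, w j = ENNReal.ofReal (if 1 ≤ j then (j : ℝ) ^ (-γ) else 0) := by
    intro j
    rcases Nat.eq_zero_or_pos j with hj | hj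
    · simp [hw, hj]
    · have hj1 : 1 ≤ j := hj
      have hjpos : (0 : ℝ) < (j : ℝ) := by exact_mod_cast hj
      simp only [hw, hj1, if_true]
      rw [← ENNReal.ofReal_rpow_of_pos hjpos, ENNReal.ofReal_natCast]
  have hwsum : (∑' j, w j) ≠ ⊤ := by
    have hsum : Summable (fun j : ℕ => if 1 ≤ j then (j : ℝ) ^ (-γ) else 0) := by
      apply Summable.of_nonneg_of_le (fun j => ?_) (fun j => ?_)
        (Real.summable_nat_rpow.2 (by linarith : -γ < -1))
      · split <;> positivity
      · split
        · exact le_rfl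
        · positivity
    have := ENNReal.ofReal_tsum_of_nonneg (fun j => by split <;> positivity) hsum
    simp only [← hwval] at this
    rw [← this]
    exact ENNReal.ofReal_ne_top
  set f : ℕ → Ω → ℝ≥0∞ := fun i ω => ENNReal.ofReal (Y i ω) with hfdef
  have hfmeas : ∀ i, Measurable (f i) := fun i => (hYmeas i).ennreal_ofReal
  have hYpow : ∀ i ω, ENNReal.ofReal (Y i ω ^ β) = (f i ω) ^ β := by
    intro i ω
    rcases eq_or_lt_of_le (hYpos i ω) with h | h
    · simp [hfdef, ← h, Real.zero_rpow (ne_of_gt hβ0), ENNReal.zero_rpow_of_pos hβ0]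
    · rw [hfdef]; exact (ENNReal.ofReal_rpow_of_pos h).symm
  set S : ℝ≥0∞ := ⨆ i : ℕ, ⨆ _ : 1 ≤ i, (∫⁻ ω, ENNReal.ofReal (Y i ω ^ β) ∂ℙ) ^ (1 / β)
    with hSdef
  set g : Ω → ℝ≥0∞ := fun ω => ENNReal.ofReal ((τ ω : ℝ) ^ α) with hgdef
  have hgval : ∀ ω, g ω = ((τ ω : ℝ≥0∞)) ^ α := by
    intro ω
    have hpos : (0 : ℝ) < (τ ω : ℝ) := by exact_mod_cast hτ ω
    rw [hgdef]
    simp only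
    rw [← ENNReal.ofReal_rpow_of_pos hpos, ENNReal.ofReal_natCast]
  have hgmeas : Measurable g := by
    have : Measurable fun n : ℕ => ENNReal.ofReal ((n : ℝ) ^ α) := measurable_from_top
    exact this.comp hτmeas
  set h : Ω → ℝ≥0∞ := fun ω => (∑' j, w j * (f j ω) ^ β) ^ (1 / β) with hhdef
  have hhmeas : Measurable h := by
    apply (ENNReal.continuous_rpow_const.measurable).comp
    exact Measurable.ennreal_tsum fun j =>
      measurable_const.mul ((ENNReal.continuous_rpow_const.measurable).comp (hfmeas j))
  -- pointwise bound
  have key : ∀ ω, (⨆ i ∈ Finset.Icc 1 (τ ω), ENNReal.ofReal (Y i ω)) ≤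
      g ω ^ ((β - 1) / β) * h ω := by
    intro ω
    refine iSup₂_le fun i hi => ?_
    rw [Finset.mem_Icc] at hi
    obtain ⟨hi1, hiτ⟩ := hi
    have hipos : (0 : ℝ≥0∞) < (i : ℝ≥0∞) := by exact_mod_cast hi1
    have hine : ((i : ℝ≥0∞)) ≠ 0 := hipos.ne'
    have hitop : ((i : ℝ≥0∞)) ≠ ⊤ := ENNReal.natCast_ne_top i
    -- step 1 : f i ω ≤ i^(γ/β) * h ω
    have step1 : f i ω ≤ (i : ℝ≥0∞) ^ (γ / β) * h ω := by
      have h1 : w i * (f i ω) ^ β ≤ ∑' j, w j * (f j ω) ^ β := ENNReal.le_tsum i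
      have h2 : (w i * (f i ω) ^ β) ^ (1 / β) ≤ h ω :=
        ENNReal.rpow_le_rpow h1 (by positivity)
      have hwi : w i = (i : ℝ≥0∞) ^ (-γ) := by simp [hw, hi1]
      have h3 : (w i * (f i ω) ^ β) ^ (1 / β)
          = (i : ℝ≥0∞) ^ (-(γ / β)) * f i ω := by
        rw [hwi, ENNReal.mul_rpow_of_nonneg _ _ (by positivity : (0:ℝ) ≤ 1/β),
          ← ENNReal.rpow_mul, ← ENNReal.rpow_mul]
        congr 1
        · congr 1; field_simp
        · rw [mul_one_div, div_self hβ0.ne', ENNReal.rpow_one]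
      rw [h3] at h2
      calc f i ω = ((i : ℝ≥0∞) ^ (γ / β) * (i : ℝ≥0∞) ^ (-(γ / β))) * f i ω := by
            rw [← ENNReal.rpow_add _ _ hine hitop]
            simp
        _ = (i : ℝ≥0∞) ^ (γ / β) * ((i : ℝ≥0∞) ^ (-(γ / β)) * f i ω) := by ring
        _ ≤ (i : ℝ≥0∞) ^ (γ / β) * h ω :=
            mul_le_mul_right h2 _
    -- step 2 : i^(γ/β) ≤ g ω^((β-1)/β)
    have step2 : (i : ℝ≥0∞) ^ (γ / β) ≤ g ω ^ ((β - 1) / β) := by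
      rw [hgval ω, ← ENNReal.rpow_mul]
      have hexp : α * ((β - 1) / β) = γ / β := by rw [hγdef]; ring
      rw [hexp]
      exact ENNReal.rpow_le_rpow (by exact_mod_cast hiτ) (by positivity)
    calc ENNReal.ofReal (Y i ω) = f i ω := rfl
      _ ≤ (i : ℝ≥0∞) ^ (γ / β) * h ω := step1
      _ ≤ g ω ^ ((β - 1) / β) * h ω := mul_le_mul_left step2 _
  -- Hölder
  set p : ℝ := β / (β - 1) with hpdef
  have hpq : p.HolderConjugate β := by
    rw [Real.holderConjugate_iff]
    constructor
    · rw [hpdef, lt_div_iff₀ (by linarith : (0:ℝ) < β - 1)]; linarith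
    · rw [hpdef]; field_simp; ring
  have holder := ENNReal.lintegral_mul_le_Lp_mul_Lq (ℙ : Measure Ω) hpq
    (f := fun ω => g ω ^ ((β - 1) / β))
    ((ENNReal.continuous_rpow_const.measurable.comp hgmeas).aemeasurable) hhmeas.aemeasurable
  simp only [Pi.mul_apply] at holder
  -- simplify the first Hölder factor
  have e1 : (∫⁻ ω, (g ω ^ ((β - 1) / β)) ^ p ∂ℙ) ^ (1 / p)
      = (∫⁻ ω, g ω ∂ℙ) ^ ((β - 1) / β) := by
    have hb1 : β - 1 ≠ 0 := by linarith
    have hexp : (β - 1) / β * p = 1 := by rw [hpdef]; field_simp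
    have hinv : 1 / p = (β - 1) / β := by rw [hpdef, one_div_div]
    rw [hinv]
    congr 1
    apply lintegral_congr; intro ω
    rw [← ENNReal.rpow_mul, hexp, ENNReal.rpow_one]
  have e2 : ∀ ω, h ω ^ β = ∑' j, w j * (f j ω) ^ β := by
    intro ω
    rw [hhdef]
    simp only
    rw [← ENNReal.rpow_mul, one_div, inv_mul_cancel₀ hβ0.ne', ENNReal.rpow_one]
  have e3 : (∫⁻ ω, h ω ^ β ∂ℙ) = ∑' j, w j * ∫⁻ ω, (f j ω) ^ β ∂ℙ := by
    simp only [e2]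
    have hm' : ∀ j : ℕ, Measurable fun ω => (f j ω) ^ β := fun j =>
      (ENNReal.continuous_rpow_const.measurable).comp (hfmeas j)
    have hm : ∀ j : ℕ, Measurable fun ω => w j * (f j ω) ^ β := fun j =>
      measurable_const.mul (hm' j)
    rw [lintegral_tsum fun j => (hm j).aemeasurable]
    exact tsum_congr fun j => lintegral_const_mul _ (hm' j)
  -- bound each term by the sup
  have e4 : ∀ j, w j * (∫⁻ ω, (f j ω) ^ β ∂ℙ) ≤ w j * S ^ β := by
    intro j
    rcases Nat.eq_zero_or_pos j with hj | hj
    · simp [hw, hj]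
    · apply mul_le_mul_right
      have h1 : (∫⁻ ω, ENNReal.ofReal (Y j ω ^ β) ∂ℙ) ^ (1 / β) ≤ S := by
        rw [hSdef]
        exact le_iSup₂ (f := fun i (_ : 1 ≤ i) =>
          (∫⁻ ω, ENNReal.ofReal (Y i ω ^ β) ∂ℙ) ^ (1 / β)) j hj
      have h2 := ENNReal.rpow_le_rpow h1 hβ0.le
      rw [← ENNReal.rpow_mul, one_div, inv_mul_cancel₀ hβ0.ne', ENNReal.rpow_one] at h2
      calc (∫⁻ ω, (f j ω) ^ β ∂ℙ) = ∫⁻ ω, ENNReal.ofReal (Y j ω ^ β) ∂ℙ := by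
            apply lintegral_congr; intro ω; rw [hYpow]
        _ ≤ S ^ β := h2
  have e5 : (∫⁻ ω, h ω ^ β ∂ℙ) ^ (1 / β) ≤ (∑' j, w j) ^ (1 / β) * S := by
    rw [e3]
    calc (∑' j, w j * ∫⁻ ω, (f j ω) ^ β ∂ℙ) ^ (1 / β)
        ≤ (∑' j, w j * S ^ β) ^ (1 / β) :=
          ENNReal.rpow_le_rpow (ENNReal.tsum_le_tsum e4) (by positivity)
      _ = ((∑' j, w j) * S ^ β) ^ (1 / β) := by rw [ENNReal.tsum_mul_right]
      _ = (∑' j, w j) ^ (1 / β) * S := by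
          rw [ENNReal.mul_rpow_of_nonneg _ _ (by positivity : (0:ℝ) ≤ 1/β),
            ← ENNReal.rpow_mul, mul_one_div, div_self hβ0.ne', ENNReal.rpow_one]
  refine ⟨(∑' j, w j) ^ (1 / β), ENNReal.rpow_ne_top_of_nonneg (by positivity) hwsum, ?_⟩
  calc ∫⁻ ω, ⨆ i ∈ Finset.Icc 1 (τ ω), ENNReal.ofReal (Y i ω) ∂ℙ
      ≤ ∫⁻ ω, g ω ^ ((β - 1) / β) * h ω ∂ℙ := lintegral_mono key
    _ ≤ (∫⁻ ω, (g ω ^ ((β - 1) / β)) ^ p ∂ℙ) ^ (1 / p) * (∫⁻ ω, h ω ^ β ∂ℙ) ^ (1 / β) :=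
        holder
    _ = (∫⁻ ω, g ω ∂ℙ) ^ ((β - 1) / β) * (∫⁻ ω, h ω ^ β ∂ℙ) ^ (1 / β) := by rw [e1]
    _ ≤ (∫⁻ ω, g ω ∂ℙ) ^ ((β - 1) / β) * ((∑' j, w j) ^ (1 / β) * S) :=
        mul_le_mul_right e5 _
    _ = (∑' j, w j) ^ (1 / β) * (∫⁻ ω, g ω ∂ℙ) ^ ((β - 1) / β) * S := by ring
end

section
/- For any d×d real matrix A and unit vectors u, v ∈ R^d with Av ≠ 0, ln⁺(|Au|/|Av|) ≤ √2 · (‖A‖/|Av|) · δ(ū, v̄), where δ(ū, v̄) = |u ∧ v| is the projective (sine) distance between the directions of u and v. -/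
open MeasureTheory
open scoped RealInnerProductSpace

/-- For a linear map `A` on `ℝ^d` and unit vectors `u, v` with `Av ≠ 0`,
`ln⁺(|Au|/|Av|) ≤ √2 · (‖A‖/|Av|) · δ(ū, v̄)` where `δ(ū, v̄) = √(1 − ⟨u,v⟩²)`
is the projective (sine) distance. -/
theorem stmt3 {d : ℕ} (A : EuclideanSpace ℝ (Fin d) →L[ℝ] EuclideanSpace ℝ (Fin d))
    (u v : EuclideanSpace ℝ (Fin d)) (hu : ‖u‖ = 1) (hv : ‖v‖ = 1) (hAv : A v ≠ 0) :
    max (Real.log (‖A u‖ / ‖A v‖)) 0 ≤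
      Real.sqrt 2 * (‖A‖ / ‖A v‖) * Real.sqrt (1 - ⟪u, v⟫ ^ 2) := by
  set c : ℝ := ⟪u, v⟫ with hc
  have hAvpos : 0 < ‖A v‖ := norm_pos_iff.mpr hAv
  have hcle : |c| ≤ 1 := by
    have := abs_real_inner_le_norm u v
    simpa [hu, hv] using this
  obtain ⟨w, hwn, hwu, hwv⟩ : ∃ w : EuclideanSpace ℝ (Fin d),
      ‖w‖ = 1 ∧ ‖A w‖ = ‖A u‖ ∧ ⟪w, v⟫ = |c| := by
    rcases le_or_gt 0 c with h | h
    · exact ⟨u, hu, rfl, by rw [abs_of_nonneg h]⟩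
    · refine ⟨-u, by simpa using hu, by simp, ?_⟩
      rw [inner_neg_left, abs_of_neg h]
  -- ‖w - v‖² = 2 - 2|c| ≤ 2(1 - c²)
  have hsq : ‖w - v‖ ^ 2 = 2 - 2 * |c| := by
    rw [@norm_sub_sq_real, hwn, hv, hwv]; ring
  have hsqle : ‖w - v‖ ^ 2 ≤ 2 * (1 - c ^ 2) := by
    rw [hsq]
    have : c ^ 2 ≤ |c| := by
      have := abs_nonneg c
      nlinarith [sq_abs c]
    nlinarith
  have hwvle : ‖w - v‖ ≤ Real.sqrt 2 * Real.sqrt (1 - c ^ 2) := by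
    rw [← Real.sqrt_mul (by norm_num : (0:ℝ) ≤ 2)]
    have h0 : (0:ℝ) ≤ 2 * (1 - c ^ 2) := by nlinarith [sq_abs c]
    calc ‖w - v‖ = Real.sqrt (‖w - v‖ ^ 2) := by
          rw [Real.sqrt_sq (norm_nonneg _)]
      _ ≤ Real.sqrt (2 * (1 - c ^ 2)) := Real.sqrt_le_sqrt hsqle
  set t : ℝ := Real.sqrt 2 * (‖A‖ / ‖A v‖) * Real.sqrt (1 - c ^ 2) with ht
  have htnn : 0 ≤ t := by positivity
  have key : ‖A u‖ ≤ ‖A v‖ + ‖A‖ * ‖w - v‖ := by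
    calc ‖A u‖ = ‖A w‖ := hwu.symm
      _ = ‖A v + A (w - v)‖ := by rw [map_sub, show A v + (A w - A v) = A w from by abel]
      _ ≤ ‖A v‖ + ‖A (w - v)‖ := norm_add_le _ _
      _ ≤ ‖A v‖ + ‖A‖ * ‖w - v‖ := by
          gcongr
          exact A.le_opNorm _
  have hdivle : ‖A u‖ / ‖A v‖ ≤ 1 + t := by
    rw [div_le_iff₀ hAvpos]
    have h1 : ‖A‖ * ‖w - v‖ ≤ t * ‖A v‖ := by
      have he : t * ‖A v‖ = ‖A‖ * (Real.sqrt 2 * Real.sqrt (1 - c ^ 2)) := by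
        rw [ht, show Real.sqrt 2 * (‖A‖ / ‖A v‖) * Real.sqrt (1 - c ^ 2) * ‖A v‖
            = ‖A‖ / ‖A v‖ * ‖A v‖ * (Real.sqrt 2 * Real.sqrt (1 - c ^ 2)) from by ring,
          div_mul_cancel₀ _ hAvpos.ne']
      rw [he]
      exact mul_le_mul_of_nonneg_left hwvle (norm_nonneg _)
    linarith [key]
  refine max_le ?_ htnn
  by_cases hAu : ‖A u‖ = 0
  · simp [hAu, htnn]
  · have hr : 0 < ‖A u‖ / ‖A v‖ :=
      div_pos (lt_of_le_of_ne (norm_nonneg _) (Ne.symm hAu)) hAvpos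
    calc Real.log (‖A u‖ / ‖A v‖) ≤ ‖A u‖ / ‖A v‖ - 1 :=
          Real.log_le_sub_one_of_pos hr
      _ ≤ t := by linarith
end
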